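/- Let v be a unitary and e a hermitian projection commuting with v, and let U = (v+v*)/2 + (2e−1)(v−v*)/2. If ∂₃ is a derivation with ∂₃(v) = 2πi·v and ∂₃(e) = 0, then ∂₃(U) = 2πi((v−v*)/2 + (2e−1)(v+v*)/2) and U∂₃(U*) = −2πi(2e−1). -/
import Mathlib


open Real Complex

/-- Derivative of the Powers-Rieffel unitary: with ∂v = 2πi·v, ∂(v*) = −2πi·v*,
∂e = 0, one has ∂U = 2πi((v−v*)/2 + (2e−1)(v+v*)/2) and U ∂(U*) = −2πi(2e−1). -/
theorem powers_rieffel_unitary_derivative {A : Type*} [Ring A] [StarRing A]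
    [Algebra ℂ A] [StarModule ℂ A]
    (e v : A)
    (he_star : star e = e) (he_idem : e * e = e)
    (hv_left : star v * v = 1) (hv_right : v * star v = 1)
    (hcomm : e * v = v * e)
    (D : A → A)
    (hDadd : ∀ a b : A, D (a + b) = D a + D b)
    (hDsmul : ∀ (c : ℂ) (a : A), D (c • a) = c • D a)
    (hleib : ∀ a b : A, D (a * b) = D a * b + a * D b)
    (hDv : D v = ((2 * π * I : ℂ)) • v)
    (hDvstar : D (star v) = (-(2 * π * I : ℂ)) • star v)
    (hDe : D e = 0) :
    (let U : A := (2 : ℂ)⁻¹ • (v + star v) + (2 * e - 1) * ((2 : ℂ)⁻¹ • (v - star v))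
     D U = (2 * π * I : ℂ) •
        ((2 : ℂ)⁻¹ • (v - star v) + (2 * e - 1) * ((2 : ℂ)⁻¹ • (v + star v))) ∧
     U * D (star U) = -((2 * π * I : ℂ) • (2 * e - 1))) := by
  intro U
  have hcomm' : e * star v = star v * e := by
    have := congrArg star hcomm
    simpa [he_star, star_mul] using this.symm
  have hD1 : D 1 = 0 := by
    have h := hleib 1 1
    simp only [one_mul, mul_one] at h
    exact left_eq_add.mp h
  have hDsub : ∀ a b : A, D (a - b) = D a - D b := by
    intro a b
    have : a - b = a + (-1 : ℂ) • b := by simp [sub_eq_add_neg]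
    rw [this, hDadd, hDsmul]; simp [sub_eq_add_neg]
  have hDw : D (2 * e - 1) = 0 := by
    rw [hDsub, hD1]
    have : (2 : A) * e = e + e := by rw [two_mul]
    rw [this, hDadd, hDe]; simp
  constructor
  · show D ((2 : ℂ)⁻¹ • (v + star v) + (2 * e - 1) * ((2 : ℂ)⁻¹ • (v - star v))) = _
    rw [hDadd, hDsmul, hDadd, hleib, hDw, hDsmul, hDsub, hDv, hDvstar]
    simp only [smul_add, smul_sub, smul_smul, mul_add, mul_sub, mul_smul_comm, zero_mul, zero_add, smul_neg, neg_smul, sub_neg_eq_add]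
    ring_nf
    simp [sub_eq_add_neg]
  · show ((2 : ℂ)⁻¹ • (v + star v) + (2 * e - 1) * ((2 : ℂ)⁻¹ • (v - star v))) *
      D (star ((2 : ℂ)⁻¹ • (v + star v) + (2 * e - 1) * ((2 : ℂ)⁻¹ • (v - star v)))) = _
    have hsU : star ((2 : ℂ)⁻¹ • (v + star v) + (2 * e - 1) * ((2 : ℂ)⁻¹ • (v - star v)))
        = (2 : ℂ)⁻¹ • (v + star v) - ((2 : ℂ)⁻¹ • (v - star v)) * (2 * e - 1) := by
      simp [star_add, star_mul, star_smul, he_star, star_sub, smul_sub, smul_add, sub_mul, mul_sub, mul_add, add_mul]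
      simp only [mul_two, two_mul, mul_add, add_mul, smul_add]
      abel
    rw [hsU]
    have hwv : (2 * e - 1) * v = v * (2 * e - 1) := by
      simp only [sub_mul, mul_sub, one_mul, mul_one, two_mul, add_mul, mul_add, hcomm]
    have hwv' : (2 * e - 1) * star v = star v * (2 * e - 1) := by
      simp only [sub_mul, mul_sub, one_mul, mul_one, two_mul, add_mul, mul_add, hcomm']
    have hv_left' : ∀ x : A, star v * (v * x) = x := by
      intro x; rw [← mul_assoc, hv_left, one_mul]
    have hv_right' : ∀ x : A, v * (star v * x) = x := by
      intro x; rw [← mul_assoc, hv_right, one_mul]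
    have he_idem' : ∀ x : A, e * (e * x) = e * x := by
      intro x; rw [← mul_assoc, he_idem]
    have hcomm1 : ∀ x : A, e * (v * x) = v * (e * x) := by
      intro x; rw [← mul_assoc, hcomm, mul_assoc]
    have hcomm1' : ∀ x : A, e * (star v * x) = star v * (e * x) := by
      intro x; rw [← mul_assoc, hcomm', mul_assoc]
    rw [hDsub, hDsmul, hDadd, hleib, hDsmul, hDsub, hDv, hDvstar, hDw]
    simp only [two_mul, mul_add, add_mul, mul_sub, sub_mul, smul_add, smul_sub, smul_smul,
      mul_smul_comm, smul_mul_assoc, mul_one, one_mul, mul_zero, add_zero, zero_add, mul_assoc,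
      hcomm, hcomm', hcomm1, hcomm1', hv_left, hv_right, hv_left', hv_right', he_idem, he_idem']
    module
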